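/- arXiv:1804.10452 — 3 statements merged into one kernel-verified Lean document; each statement's English description precedes it below -/
import Mathlib

section
/- Each relation S_n on the set H of finitely supported Ignatiev sequences is Noetherian: every nonempty subset X of H has an S_n-maximal element y, i.e., there is y ∈ X such that for no x ∈ X does y S_n x hold. -/
open Ordinal

noncomputable def e1 (a : Ordinal) : Ordinal := omega0 ^ a - 1

noncomputable def eIter : ℕ → Ordinal → Ordinal
  | 0 => id
  | n + 1 => e1 ∘ eIter n

/-- Ordinal logarithm: exponent of the least term in the Cantor normal form. -/
noncomputable def ell (o : Ordinal) : Ordinal := (Ordinal.CNF omega0 o).getLast?.elim 0 Prod.fst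

/-- Ignatiev (ℓ-)sequences. -/
def IsIgnatiev (x : ℕ → Ordinal) : Prop := ∀ i, x (i + 1) ≤ ell (x i)

/-- The domain of Ignatiev's frame below Λ. -/
def Iset (Λ : Ordinal) : Set (ℕ → Ordinal) := {x | IsIgnatiev x ∧ ∀ i, x i < Λ}

/-- Finitely supported Ignatiev sequences below Λ. -/
def Hset (Λ : Ordinal) : Set (ℕ → Ordinal) := {x | x ∈ Iset Λ ∧ ∃ j, x j = 0}

/-- The accessibility relations. -/
def Rrel (n : ℕ) (x y : ℕ → Ordinal) : Prop :=
  (∀ m ≤ n, y m < x m) ∧ ∀ i, n < i → y i ≤ x i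

/-- Transfinite iterates of the accessibility relation, with witnesses in `D`. -/
noncomputable def Iter (D : Set (ℕ → Ordinal)) (n : ℕ) :
    Ordinal → (ℕ → Ordinal) → (ℕ → Ordinal) → Prop :=
  Ordinal.lt_wf.fix fun α rec x y =>
    if α = 0 then x = y
    else ∀ β, ∀ h : β < α, ∃ z ∈ D, Rrel n x z ∧ rec β h z y

inductive Formula : Type 1 where
  | top : Formula
  | and : Formula → Formula → Formula
  | dia : ℕ → Ordinal → Formula → Formula

def Formula.Bounded (Λ : Ordinal) : Formula → Prop
  | .top => True
  | .and φ ψ => φ.Bounded Λ ∧ ψ.Bounded Λ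
  | .dia _ a φ => a < Λ ∧ φ.Bounded Λ

/-- Forcing over the frame with domain `D`. -/
noncomputable def Forces (D : Set (ℕ → Ordinal)) : (ℕ → Ordinal) → Formula → Prop
  | _, .top => True
  | x, .and φ ψ => Forces D x φ ∧ Forces D x ψ
  | x, .dia n a φ => ∃ y ∈ D, Iter D n a x y ∧ Forces D y φ

/-- Monomial normal forms, coded as lists of (base, exponent) pairs. -/
def MNFc (Λ : Ordinal) (L : List (ℕ × Ordinal)) : Prop :=
  L.Chain' (fun p q => p.1 < q.1) ∧ (∀ p ∈ L, 0 < p.2 ∧ p.2 < Λ) ∧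
    L.Chain' (fun p q => ∃ δ < Λ, p.2 = eIter (q.1 - p.1) q.2 * (2 + δ))

/-- The formula coded by an MNF code. -/
def toFormula : List (ℕ × Ordinal) → Formula
  | [] => .top
  | p :: L => .and (.dia p.1 p.2 .top) (toFormula L)

/-- The projections π of an MNF, i.e. the translated Ignatiev sequence x_ψ. -/
noncomputable def proj : List (ℕ × Ordinal) → ℕ → Ordinal
  | [], _ => 0
  | (n, a) :: L, m => if m ≤ n then eIter (n - m) a else proj L m

theorem S_noetherian (Λ : Ordinal) (n : ℕ) (X : Set (ℕ → Ordinal))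
    (hX : X ⊆ Hset Λ) (hne : X.Nonempty) :
    ∃ y ∈ X, ∀ x ∈ X, ¬ Rrel n y x := by
  obtain ⟨y, hy, hmin⟩ := Ordinal.lt_wf.has_min ((fun x => x 0) '' X)
    (hne.image _)
  obtain ⟨y, hyX, rfl⟩ := hy
  exact ⟨y, hyX, fun x hx hR => hmin _ ⟨x, hx, rfl⟩ (hR.1 0 (Nat.zero_le n))⟩
end

section
/- For x, y ∈ H, n < ω and α < Λ: x S_n^{α+1} y if and only if there exists z (necessarily in H) with x S_n z and z S_n^α y. -/
open Ordinal

section Iter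

variable {D : Set (ℕ → Ordinal)} {n : ℕ} {α β : Ordinal} {x y z : ℕ → Ordinal}

theorem iter_iff :
    Iter D n α x y ↔
      if α = 0 then x = y else ∀ β < α, ∃ z ∈ D, Rrel n x z ∧ Iter D n β z y := by
  rw [Iter, Ordinal.lt_wf.fix_eq]

theorem iter_iff_of_ne_zero (hα : α ≠ 0) :
    Iter D n α x y ↔ ∀ β < α, ∃ z ∈ D, Rrel n x z ∧ Iter D n β z y := by
  rw [iter_iff, if_neg hα]

theorem Rrel.trans {w : ℕ → Ordinal} (hxz : Rrel n x z) (hzw : Rrel n z w) : Rrel n x w :=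
  ⟨fun m hm => (hzw.1 m hm).trans (hxz.1 m hm), fun i hi => (hzw.2 i hi).trans (hxz.2 i hi)⟩

-- Transitivity of `Rrel` lets the given step absorb the first step of the iterate.
theorem exists_rrel_iter_of_rrel_of_iter (hxz : Rrel n x z) (hzy : Iter D n α z y)
    (hβ : β < α) : ∃ w ∈ D, Rrel n x w ∧ Iter D n β w y := by
  obtain ⟨w, hw, hzw, hwy⟩ := (iter_iff_of_ne_zero hβ.ne_bot).1 hzy β hβ
  exact ⟨w, hw, hxz.trans hzw, hwy⟩

theorem iter_succ_iff :
    Iter D n (α + 1) x y ↔ ∃ z ∈ D, Rrel n x z ∧ Iter D n α z y := by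
  have hα : α < α + 1 := Order.lt_add_one_iff.2 le_rfl
  rw [iter_iff_of_ne_zero hα.ne_bot]
  refine ⟨fun h => h α hα, ?_⟩
  rintro ⟨z, hz, hxz, hzy⟩ β hβ
  rcases (Order.lt_add_one_iff.1 hβ).eq_or_lt with rfl | hlt
  · exact ⟨z, hz, hxz, hzy⟩
  · exact exists_rrel_iter_of_rrel_of_iter hxz hzy hlt

end Iter

theorem S_succ_iter_general (Λ : Ordinal)
    (n : ℕ) (α : Ordinal) (x y : ℕ → Ordinal) :
    Iter (Hset Λ) n (α + 1) x y ↔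
      ∃ z ∈ Hset Λ, Rrel n x z ∧ Iter (Hset Λ) n α z y :=
  iter_succ_iff

theorem S_succ_iter (Λ : Ordinal) (hpos : 0 < Λ) (heps : Ordinal.omega0 ^ Λ = Λ)
    (n : ℕ) (α : Ordinal) (hα : α < Λ) (x y : ℕ → Ordinal)
    (hx : x ∈ Hset Λ) (hy : y ∈ Hset Λ) :
    Iter (Hset Λ) n (α + 1) x y ↔
      ∃ z ∈ Hset Λ, Rrel n x z ∧ Iter (Hset Λ) n α z y :=
  S_succ_iter_general Λ n α x y
end

section
/- For every finitely supported Ignatiev sequence x ∈ H there is a unique formula ψ in monomial normal form such that the canonical translation x_ψ equals x. Concretely, the map M defined by M(⟨0⟩) = ⊤, M(⟨α,0⟩) = ⟨0^α⟩⊤, and M(⟨α₀,α₁,…⟩) = M(⟨α₁,…⟩) if α₀ = e(α₁), and ⟨0^{α₀}⟩⊤ ∧ M(⟨α₁,…⟩) if α₀ > e(α₁), satisfies x_{M(x)} = x. -/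
open Ordinal

/-!
An MNF code `L` can be read off its translation `proj L`: its indices are exactly the positions
`m` with `proj L m ≠ e1 (proj L (m + 1))`, and its exponents are the values of `proj L` there.
Between indices the translation is built by iterating `e1`, while at an index the factor `2 + δ`
of the MNF condition keeps the entry away from `e1` of its successor. This gives uniqueness.

For existence, scan a finitely supported Ignatiev sequence `x` downwards from a zero, recording
`(s, x s)` exactly when `x s ≠ e1 (x (s + 1))`. The MNF condition at such a position holds because
`x (s + 1) ≤ ℓ (x s)`, and `ℓ` is the least exponent of the Cantor normal form, so
`ω ^ x (s + 1)` divides `x s`.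
-/

open Ordinal List

lemma e1_zero : e1 0 = 0 := by simp [e1]

lemma e1_of_pos {a : Ordinal} (ha : 0 < a) : e1 a = ω ^ a := by
  have hω : ω ≤ ω ^ a := by
    simpa using opow_le_opow_right omega0_pos (Order.one_le_iff_ne_zero.2 ha.ne')
  rw [e1]
  nth_rewrite 1 [← Ordinal.one_add_of_omega0_le hω]
  exact Ordinal.add_sub_cancel _ _

lemma e1_pos {a : Ordinal} (ha : 0 < a) : 0 < e1 a := by
  rw [e1_of_pos ha]; exact opow_pos _ omega0_pos

lemma eIter_pos (k : ℕ) {a : Ordinal} (ha : 0 < a) : 0 < eIter k a := by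
  induction k with
  | zero => exact ha
  | succ k ih => exact e1_pos ih

lemma eIter_sub_eq_e1 {m n : ℕ} (h : m < n) (a : Ordinal) :
    eIter (n - m) a = e1 (eIter (n - (m + 1)) a) := by
  rw [show n - m = n - (m + 1) + 1 by omega]; rfl

lemma mul_two_add_ne_self {c : Ordinal} (hc : 0 < c) (δ : Ordinal) : c * (2 + δ) ≠ c := by
  refine (lt_of_lt_of_le ?_ (mul_le_mul_right (le_self_add : (2 : Ordinal) ≤ 2 + δ) c)).ne'
  simpa using mul_lt_mul_of_pos_left one_lt_two hc

lemma ell_zero : ell 0 = 0 := by simp [ell]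

lemma ell_le_fst_of_mem_CNF {c : Ordinal} {p : Ordinal × Ordinal} (hp : p ∈ CNF ω c) :
    ell c ≤ p.1 := by
  have hsorted : ((CNF ω c).map Prod.fst).Pairwise (· ≥ ·) :=
    (sortedGT_iff_pairwise.1 (CNF.sortedGT ω c)).imp le_of_lt
  have := hsorted.rel_getLast (mem_map_of_mem hp)
  rw [ell, getLast?_eq_some_getLast (ne_nil_of_mem hp)]
  simpa [getLast_map] using this

lemma opow_ell_dvd (c : Ordinal) : ω ^ ell c ∣ c := by
  have hfoldr : ∀ l : List (Ordinal × Ordinal), (∀ p ∈ l, ell c ≤ p.1) →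
      ω ^ ell c ∣ l.foldr (fun p r ↦ ω ^ p.1 * p.2 + r) 0 := by
    intro l hl
    induction l with
    | nil => exact dvd_zero _
    | cons p l ih =>
      exact dvd_add ((opow_dvd_opow _ (hl p mem_cons_self)).mul_right _)
        (ih fun q hq ↦ hl q (mem_cons_of_mem _ hq))
  simpa [CNF.foldr] using hfoldr _ fun p ↦ ell_le_fst_of_mem_CNF

lemma exists_eq_e1_mul_two_add {b c : Ordinal} (hb : 0 < b) (hbc : b ≤ ell c) (hc : c ≠ 0)
    (hne : c ≠ e1 b) : ∃ δ ≤ c, c = e1 b * (2 + δ) := by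
  obtain ⟨γ, rfl⟩ := (opow_dvd_opow ω hbc).trans (opow_ell_dvd c)
  rw [e1_of_pos hb] at hne ⊢
  have h1γ : 1 < γ := lt_of_le_of_ne (Order.one_le_iff_ne_zero.2 (by rintro rfl; simp at hc))
    (by rintro rfl; simp at hne)
  have h2γ : 2 ≤ γ := by simpa [one_add_one_eq_two] using Order.add_one_le_of_lt h1γ
  refine ⟨γ - 2, ?_, by rw [Ordinal.add_sub_cancel_of_le h2γ]⟩
  calc γ - 2 ≤ γ := Ordinal.sub_le_self _ _
    _ ≤ ω ^ b * γ := Ordinal.le_mul_right _ (opow_pos _ omega0_pos)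

lemma IsIgnatiev.eq_zero_of_le {x : ℕ → Ordinal} (hx : IsIgnatiev x) {m n : ℕ} (hmn : m ≤ n)
    (hm : x m = 0) : x n = 0 := by
  induction n, hmn using Nat.le_induction with
  | base => exact hm
  | succ n _ ih => simpa [ih, ell_zero] using hx n

lemma isChain_lt_on_iff_pairwise {α β : Type*} [Preorder β] (f : α → β) {l : List α} :
    l.IsChain (fun a b ↦ f a < f b) ↔ l.Pairwise (fun a b ↦ f a < f b) := by
  rw [← isChain_map f, isChain_iff_pairwise, pairwise_map]

section proj

variable {n m : ℕ} {a : Ordinal} {L : List (ℕ × Ordinal)}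

lemma proj_cons_of_le (h : m ≤ n) : proj ((n, a) :: L) m = eIter (n - m) a := if_pos h

@[simp]
lemma proj_cons_self : proj ((n, a) :: L) n = a := by
  rw [proj_cons_of_le le_rfl, Nat.sub_self]; rfl

lemma proj_cons_of_lt (h : n < m) : proj ((n, a) :: L) m = proj L m := if_neg (by omega)

lemma proj_eq_e1_succ (hL : ∀ p ∈ L, m < p.1) : proj L m = e1 (proj L (m + 1)) := by
  match L, hL with
  | [], _ => exact e1_zero.symm
  | (n, a) :: L, hL =>
    have hmn : m < n := hL _ mem_cons_self
    rw [proj_cons_of_le hmn.le, proj_cons_of_le hmn, eIter_sub_eq_e1 hmn]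

lemma proj_eq_of_mem (hL : L.IsChain (fun p q ↦ p.1 < q.1)) (h : (n, a) ∈ L) :
    proj L n = a := by
  induction L with
  | nil => simp at h
  | cons p L ih =>
    obtain ⟨n₀, a₀⟩ := p
    rcases mem_cons.1 h with h | h
    · simp only [Prod.mk.injEq] at h
      simp [h]
    · have hlt : n₀ < n := (pairwise_cons.1 ((isChain_lt_on_iff_pairwise Prod.fst).1 hL)).1 _ h
      rw [proj_cons_of_lt hlt, ih hL.tail h]

end proj

namespace MNFc

variable {Λ : Ordinal}

lemma cons_iff {n : ℕ} {a : Ordinal} {L : List (ℕ × Ordinal)} :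
    MNFc Λ ((n, a) :: L) ↔ MNFc Λ L ∧ (∀ p ∈ L, n < p.1) ∧ 0 < a ∧ a < Λ ∧
      ∀ q ∈ L.head?, ∃ δ < Λ, a = eIter (q.1 - n) q.2 * (2 + δ) := by
  simp only [MNFc, Chain', isChain_lt_on_iff_pairwise Prod.fst, pairwise_cons, isChain_cons,
    forall_mem_cons]
  tauto

lemma proj_pos {n m : ℕ} {a : Ordinal} {L : List (ℕ × Ordinal)} (h : MNFc Λ ((n, a) :: L))
    (hmn : m ≤ n) : 0 < proj ((n, a) :: L) m := by
  rw [proj_cons_of_le hmn]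
  exact eIter_pos _ (cons_iff.1 h).2.2.1

lemma head_ne_e1 {n : ℕ} {a : Ordinal} {L : List (ℕ × Ordinal)} (h : MNFc Λ ((n, a) :: L)) :
    a ≠ e1 (proj L (n + 1)) := by
  obtain ⟨hL, hlt, ha, -, hlink⟩ := cons_iff.1 h
  match L, hL, hlt, hlink with
  | [], _, _, _ => simpa [proj, e1_zero] using ha.ne'
  | (n₁, a₁) :: L, hL, hlt, hlink =>
    have hn : n < n₁ := hlt _ mem_cons_self
    obtain ⟨δ, -, rfl⟩ := hlink _ rfl
    rw [← proj_cons_of_le hn.le (L := L), proj_eq_e1_succ hlt]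
    exact mul_two_add_ne_self (e1_pos (hL.proj_pos hn)) δ

lemma proj_ne_e1_iff {L : List (ℕ × Ordinal)} (h : MNFc Λ L) (m : ℕ) :
    proj L m ≠ e1 (proj L (m + 1)) ↔ m ∈ L.map Prod.fst := by
  induction L with
  | nil => simp [proj, e1_zero]
  | cons p L ih =>
    obtain ⟨n, a⟩ := p
    have hlt := (cons_iff.1 h).2.1
    rcases lt_trichotomy m n with hmn | rfl | hnm
    · have hL : ∀ p ∈ (n, a) :: L, m < p.1 :=
        forall_mem_cons.2 ⟨hmn, fun p hp ↦ hmn.trans (hlt p hp)⟩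
      simp only [proj_eq_e1_succ hL, ne_eq, not_true_eq_false, false_iff, mem_map]
      rintro ⟨p, hp, rfl⟩
      exact lt_irrefl _ (hL p hp)
    · simpa [proj_cons_of_lt (Nat.lt_succ_self m)] using h.head_ne_e1
    · rw [proj_cons_of_lt hnm, proj_cons_of_lt (hnm.trans (Nat.lt_succ_self m)),
        ih (cons_iff.1 h).1]
      simp [hnm.ne']

lemma eq_of_proj_eq {L₁ L₂ : List (ℕ × Ordinal)} (h₁ : MNFc Λ L₁) (h₂ : MNFc Λ L₂)
    (h : proj L₁ = proj L₂) : L₁ = L₂ := by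
  have hfst : L₁.map Prod.fst = L₂.map Prod.fst := by
    refine Pairwise.eq_of_mem_iff (r := (· < ·)) ?_ ?_ fun m ↦ ?_
    · exact pairwise_map.2 ((isChain_lt_on_iff_pairwise Prod.fst).1 h₁.1)
    · exact pairwise_map.2 ((isChain_lt_on_iff_pairwise Prod.fst).1 h₂.1)
    · rw [← h₁.proj_ne_e1_iff, ← h₂.proj_ne_e1_iff, h]
  have hrecover : ∀ L, MNFc Λ L → L = (L.map Prod.fst).map fun n ↦ (n, proj L n) := by
    intro L hL
    rw [map_map]
    conv_lhs => rw [← map_id L]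
    refine map_congr_left fun ⟨n, a⟩ hp ↦ ?_
    simp [proj_eq_of_mem hL.1 hp]
  rw [hrecover L₁ h₁, hrecover L₂ h₂, hfst, h]

end MNFc

lemma exists_mnfc_extend {Λ : Ordinal} {x : ℕ → Ordinal} (hx : IsIgnatiev x)
    (hxΛ : ∀ i, x i < Λ) {s : ℕ} {L : List (ℕ × Ordinal)} (hL : MNFc Λ L)
    (hLs : ∀ p ∈ L, s < p.1) (hLx : ∀ m, s < m → proj L m = x m) :
    ∃ L' : List (ℕ × Ordinal), MNFc Λ L' ∧ (∀ p ∈ L', s ≤ p.1) ∧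
      ∀ m, s ≤ m → proj L' m = x m := by
  have hproj_s : proj L s = e1 (x (s + 1)) := by
    rw [proj_eq_e1_succ hLs, hLx _ (Nat.lt_succ_self s)]
  by_cases hs : x s = e1 (x (s + 1))
  · refine ⟨L, hL, fun p hp ↦ (hLs p hp).le, fun m hm ↦ ?_⟩
    rcases hm.lt_or_eq with hm | rfl
    · exact hLx m hm
    · rw [hproj_s, hs]
  have hs0 : x s ≠ 0 := fun h0 ↦ hs (by rw [h0, hx.eq_zero_of_le (Nat.le_succ s) h0, e1_zero])
  refine ⟨(s, x s) :: L, MNFc.cons_iff.2 ⟨hL, hLs, pos_iff_ne_zero.2 hs0, hxΛ s, ?_⟩,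
    forall_mem_cons.2 ⟨le_rfl, fun p hp ↦ (hLs p hp).le⟩, fun m hm ↦ ?_⟩
  · rintro ⟨n₁, a₁⟩ hq
    obtain ⟨T, rfl⟩ := head?_eq_some_iff.1 hq
    have hn : s < n₁ := hLs _ mem_cons_self
    have hpos : 0 < x (s + 1) := hLx _ (Nat.lt_succ_self s) ▸ hL.proj_pos hn
    obtain ⟨δ, hδ, hxs⟩ := exists_eq_e1_mul_two_add hpos (hx s) hs0 hs
    refine ⟨δ, hδ.trans_lt (hxΛ s), ?_⟩
    rwa [← proj_cons_of_le hn.le, hproj_s]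
  · rcases hm.lt_or_eq with hm | rfl
    · rw [proj_cons_of_lt hm, hLx m hm]
    · exact proj_cons_self

lemma exists_mnfc_proj_eq {Λ : Ordinal} {x : ℕ → Ordinal} (hx : x ∈ Hset Λ) :
    ∃ L : List (ℕ × Ordinal), MNFc Λ L ∧ proj L = x := by
  obtain ⟨⟨hIg, hxΛ⟩, j, hj⟩ := hx
  suffices ∀ s ≤ j, ∃ L : List (ℕ × Ordinal), MNFc Λ L ∧ (∀ p ∈ L, s ≤ p.1) ∧
      ∀ m, s ≤ m → proj L m = x m by
    obtain ⟨L, hL, -, hLx⟩ := this 0 j.zero_le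
    exact ⟨L, hL, funext fun m ↦ hLx m m.zero_le⟩
  intro s hs
  induction hs using Nat.decreasingInduction with
  | self => exact ⟨[], ⟨.nil, by simp, .nil⟩, by simp, fun m hm ↦ (hIg.eq_zero_of_le hm hj).symm⟩
  | of_succ s _ ih =>
    obtain ⟨L, hL, hLs, hLx⟩ := ih
    exact exists_mnfc_extend hIg hxΛ hL hLs hLx

theorem H_to_MNF_general (Λ : Ordinal) (x : ℕ → Ordinal) (hx : x ∈ Hset Λ) :
    ∃! L : List (ℕ × Ordinal), MNFc Λ L ∧ proj L = x := by
  obtain ⟨L, hL, hLx⟩ := exists_mnfc_proj_eq hx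
  exact ⟨L, ⟨hL, hLx⟩, fun L' ⟨hL', hL'x⟩ ↦ hL'.eq_of_proj_eq hL (hL'x.trans hLx.symm)⟩

theorem H_to_MNF (Λ : Ordinal) (hpos : 0 < Λ) (heps : Ordinal.omega0 ^ Λ = Λ)
    (x : ℕ → Ordinal) (hx : x ∈ Hset Λ) :
    ∃! L : List (ℕ × Ordinal), MNFc Λ L ∧ proj L = x :=
  H_to_MNF_general Λ x hx
end
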